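/- arXiv:1906.00914 — 2 statements merged into one kernel-verified Lean document; each statement's English description precedes it below -/
import Mathlib

section
/- For all k, r ∈ ℕ and every nonempty finite set V, every C_k-stable partition γ ∈ P(V^k) is C_{k,r}-stable. -/
open Classical Matrix

noncomputable section

/-- `k`-tuples of elements of `V`. -/
abbrev Tup (V : Type) (k : ℕ) := Fin k → V

variable {V : Type}

/-- `v⟨i,x⟩` : the tuple obtained from `v` by substituting, for each `s`,
the entry of `v` in position `i s` by `x s`. -/
def substTup {k r : ℕ} (v : Tup V k) (i : Fin r → Fin k) (x : Tup V r) : Tup V k :=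
  fun j => if h : ∃ s, i s = j then x h.choose else v j

/-- `pr_j v = (v_{j 1}, …, v_{j r})`. -/
def prTup {k r : ℕ} (j : Fin r → Fin k) (v : Tup V k) : Tup V r := fun s => v (j s)

/-- `(w_1, …, w_r, w_r, …, w_r) : V^k`. -/
def extendTup [Nonempty V] {r : ℕ} (k : ℕ) (w : Tup V r) : Tup V k := fun i =>
  if h : (i : ℕ) < r then w ⟨i, h⟩
  else if h' : 0 < r then w ⟨r - 1, by omega⟩
  else Classical.arbitrary V

/-- The `r`-projection `pr_r γ` of a labelled partition (presented as a setoid) of `V^k`. -/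
def prPart [Nonempty V] {k : ℕ} (r : ℕ) (γ : Setoid (Tup V k)) : Setoid (Tup V r) where
  r w w' := γ.r (extendTup k w) (extendTup k w')
  iseqv := ⟨fun _ => γ.iseqv.refl _, fun h => γ.iseqv.symm h, fun h h' => γ.iseqv.trans h h'⟩

/-- `v^τ`, the tuple with `i`-th entry `v (τ⁻¹ i)`. -/
def permTup {k : ℕ} (τ : Equiv.Perm (Fin k)) (v : Tup V k) : Tup V k := fun i => v (τ.symm i)

/-- `γ ⪯ ρ` : the partition `ρ` refines the partition `γ`. -/
def Refines {A : Type*} (γ ρ : Setoid A) : Prop := ∀ u v : A, ρ.r u v → γ.r u v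

/-- `γ ≈ ρ` : the partitions mutually refine each other. -/
def PartEquiv {A : Type*} (γ ρ : Setoid A) : Prop := Refines γ ρ ∧ Refines ρ γ

/-- Invariance of a partition of `V^k` under `Sym(k)`. -/
def Invariant {k : ℕ} (γ : Setoid (Tup V k)) : Prop :=
  ∀ u v : Tup V k, γ.r u v → ∀ τ : Equiv.Perm (Fin k), γ.r (permTup τ u) (permTup τ v)

/-- `r`-consistency of a partition of `V^k`. -/
def Consistent [Nonempty V] {k : ℕ} (r : ℕ) (γ : Setoid (Tup V k)) : Prop :=
  ∀ u v : Tup V k, γ.r u v → ∀ j : Fin r → Fin k,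
    (prPart r γ).r (prTup j u) (prTup j v)

/-- Graph-like partitions of `V^k`. -/
def GraphLike [Nonempty V] {k : ℕ} (γ : Setoid (Tup V k)) : Prop :=
  Invariant γ ∧ (∀ r ≤ k, Consistent r γ) ∧
    ∀ u v : Tup V k, γ.r u v → ∀ i j : Fin k, u i = u j → v i = v j

/-- `{x ∈ V^r : γ(u⟨i,x⟩) = φ_i for all i ∈ [k]^(r)}`, where the colour tuple `φ` is
given by representatives. -/
def WLSet {k r : ℕ} (γ : Setoid (Tup V k)) (u : Tup V k)
    (φ : (Fin r → Fin k) → Tup V k) : Set (Tup V r) :=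
  {x | ∀ i : Fin r → Fin k, Function.Injective i → γ.r (substTup u i x) (φ i)}

/-- `{x ∈ V^r : γ(u⟨i,x⟩) = σ}`, where the colour `σ` is given by a representative `w`. -/
def CSet {k r : ℕ} (γ : Setoid (Tup V k)) (u : Tup V k)
    (i : Fin r → Fin k) (w : Tup V k) : Set (Tup V r) :=
  {x | γ.r (substTup u i x) w}

/-- `WL_{k,r}`-stability of a partition of `V^k`. -/
def WLStable {k : ℕ} (r : ℕ) (γ : Setoid (Tup V k)) : Prop :=
  r < k → ∀ u v : Tup V k, γ.r u v →
    ∀ φ : (Fin r → Fin k) → Tup V k, (WLSet γ u φ).ncard = (WLSet γ v φ).ncard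

/-- `C_{k,r}`-stability of a partition of `V^k`. -/
def CStable {k : ℕ} (r : ℕ) (γ : Setoid (Tup V k)) : Prop :=
  r < k → ∀ u v : Tup V k, γ.r u v →
    ∀ i : Fin r → Fin k, Function.Injective i → ∀ w : Tup V k,
      (CSet γ u i w).ncard = (CSet γ v i w).ncard

/-- The matrix `χ^{γ,v}_{i,σ}`, with the colour `σ` given by a representative `w`. -/
def chiMat (F : Type) [Field F] {k : ℕ} (γ : Setoid (Tup V k)) (v : Tup V k)
    (i : Fin 2 → Fin k) (w : Tup V k) : Matrix V V F :=
  Matrix.of fun x y => if γ.r (substTup v i ![x, y]) w then (1 : F) else 0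

/-- The matrix `χ^{γ,v}_φ`, with the colour tuple `φ` given by representatives. -/
def chiMatT (F : Type) [Field F] {k : ℕ} (γ : Setoid (Tup V k)) (v : Tup V k)
    (φ : (Fin 2 → Fin k) → Tup V k) : Matrix V V F :=
  Matrix.of fun x y =>
    if ∀ i : Fin 2 → Fin k, Function.Injective i → γ.r (substTup v i ![x, y]) (φ i)
    then (1 : F) else 0

/-- `IM_k^F`-stability of a partition of `V^k`. -/
def IMStable (F : Type) [Field F] [Fintype V] [DecidableEq V] {k : ℕ}
    (γ : Setoid (Tup V k)) : Prop :=
  2 < k → ∀ u v : Tup V k, γ.r u v →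
    ∀ i : Fin 2 → Fin k, Function.Injective i →
      ∃ S : (Matrix V V F)ˣ, ∀ w : Tup V k,
        (S : Matrix V V F) * chiMat F γ u i w * ((S⁻¹ : (Matrix V V F)ˣ) : Matrix V V F)
          = chiMat F γ v i w

/-- `IMt_k^F`-stability of a partition of `V^k`. -/
def IMtStable (F : Type) [Field F] [Fintype V] [DecidableEq V] {k : ℕ}
    (γ : Setoid (Tup V k)) : Prop :=
  2 < k → ∀ u v : Tup V k, γ.r u v →
    ∃ S : (Matrix V V F)ˣ, ∀ φ : (Fin 2 → Fin k) → Tup V k,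
      (S : Matrix V V F) * chiMatT F γ u φ * ((S⁻¹ : (Matrix V V F)ˣ) : Matrix V V F)
        = chiMatT F γ v φ

/-- The refinement operator `WL_{k,r}`. -/
def WLop {k : ℕ} (r : ℕ) (γ : Setoid (Tup V k)) : Setoid (Tup V k) :=
  if r < k then
    { r := fun u v => γ.r u v ∧ ∀ φ : (Fin r → Fin k) → Tup V k,
        (WLSet γ u φ).ncard = (WLSet γ v φ).ncard
      iseqv := by
        refine ⟨fun u => ⟨γ.iseqv.refl u, fun _ => rfl⟩, ?_, ?_⟩
        · rintro u v ⟨h1, h2⟩; exact ⟨γ.iseqv.symm h1, fun φ => (h2 φ).symm⟩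
        · rintro u v w ⟨h1, h2⟩ ⟨h1', h2'⟩
          exact ⟨γ.iseqv.trans h1 h1', fun φ => (h2 φ).trans (h2' φ)⟩ }
  else γ

/-- The refinement operator `C_{k,r}`. -/
def Cop {k : ℕ} (r : ℕ) (γ : Setoid (Tup V k)) : Setoid (Tup V k) :=
  if r < k then
    { r := fun u v => γ.r u v ∧ ∀ i : Fin r → Fin k, Function.Injective i →
        ∀ w : Tup V k, (CSet γ u i w).ncard = (CSet γ v i w).ncard
      iseqv := by
        refine ⟨fun u => ⟨γ.iseqv.refl u, fun _ _ _ => rfl⟩, ?_, ?_⟩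
        · rintro u v ⟨h1, h2⟩; exact ⟨γ.iseqv.symm h1, fun i hi w => (h2 i hi w).symm⟩
        · rintro u v w ⟨h1, h2⟩ ⟨h1', h2'⟩
          exact ⟨γ.iseqv.trans h1 h1', fun i hi x => (h2 i hi x).trans (h2' i hi x)⟩ }
  else γ


theorem conjRefl {M : Type*} [Monoid M] (A : M) :
    ((1 : Mˣ) : M) * A * (((1 : Mˣ)⁻¹ : Mˣ) : M) = A := by simp

theorem conjSymm {M : Type*} [Monoid M] (S : Mˣ) {A B : M}
    (h : (S : M) * A * ((S⁻¹ : Mˣ) : M) = B) :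
    ((S⁻¹ : Mˣ) : M) * B * (((S⁻¹)⁻¹ : Mˣ) : M) = A := by
  subst h
  rw [inv_inv]
  simp [mul_assoc, Units.inv_mul_cancel_left, Units.inv_mul]

theorem conjTrans {M : Type*} [Monoid M] (S T : Mˣ) {A B C : M}
    (h1 : (S : M) * A * ((S⁻¹ : Mˣ) : M) = B)
    (h2 : (T : M) * B * ((T⁻¹ : Mˣ) : M) = C) :
    ((T * S : Mˣ) : M) * A * (((T * S)⁻¹ : Mˣ) : M) = C := by
  subst h1; subst h2
  simp [Units.val_mul, _root_.mul_inv_rev, mul_assoc]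

/-- The refinement operator `IM_k^F`. -/
def IMop (F : Type) [Field F] [Fintype V] [DecidableEq V] {k : ℕ}
    (γ : Setoid (Tup V k)) : Setoid (Tup V k) :=
  if 2 < k then
    { r := fun u v => γ.r u v ∧ ∀ i : Fin 2 → Fin k, Function.Injective i →
        ∃ S : (Matrix V V F)ˣ, ∀ w : Tup V k,
          (S : Matrix V V F) * chiMat F γ u i w * ((S⁻¹ : (Matrix V V F)ˣ) : Matrix V V F)
            = chiMat F γ v i w
      iseqv := by
        refine ⟨fun u => ⟨γ.iseqv.refl u, fun i _ => ⟨1, fun w => conjRefl _⟩⟩, ?_, ?_⟩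
        · rintro u v ⟨h1, h2⟩
          refine ⟨γ.iseqv.symm h1, fun i hi => ?_⟩
          obtain ⟨S, hS⟩ := h2 i hi
          exact ⟨S⁻¹, fun w => conjSymm S (hS w)⟩
        · rintro u v w ⟨h1, h2⟩ ⟨h1', h2'⟩
          refine ⟨γ.iseqv.trans h1 h1', fun i hi => ?_⟩
          obtain ⟨S, hS⟩ := h2 i hi
          obtain ⟨T, hT⟩ := h2' i hi
          exact ⟨T * S, fun x => conjTrans S T (hS x) (hT x)⟩ }
  else γ

/-- The refinement operator `IMt_k^F`. -/
def IMtop (F : Type) [Field F] [Fintype V] [DecidableEq V] {k : ℕ}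
    (γ : Setoid (Tup V k)) : Setoid (Tup V k) :=
  if 2 < k then
    { r := fun u v => γ.r u v ∧
        ∃ S : (Matrix V V F)ˣ, ∀ φ : (Fin 2 → Fin k) → Tup V k,
          (S : Matrix V V F) * chiMatT F γ u φ * ((S⁻¹ : (Matrix V V F)ˣ) : Matrix V V F)
            = chiMatT F γ v φ
      iseqv := by
        refine ⟨fun u => ⟨γ.iseqv.refl u, ⟨1, fun φ => conjRefl _⟩⟩, ?_, ?_⟩
        · rintro u v ⟨h1, ⟨S, hS⟩⟩
          exact ⟨γ.iseqv.symm h1, ⟨S⁻¹, fun φ => conjSymm S (hS φ)⟩⟩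
        · rintro u v w ⟨h1, ⟨S, hS⟩⟩ ⟨h1', ⟨T, hT⟩⟩
          exact ⟨γ.iseqv.trans h1 h1', ⟨T * S, fun φ => conjTrans S T (hS φ) (hT φ)⟩⟩ }
  else γ

/-- Iterate a refinement operator `|V|^k` times, reaching its stable fixed point. -/
def stabilize [Fintype V] {k : ℕ} (R : Setoid (Tup V k) → Setoid (Tup V k))
    (γ : Setoid (Tup V k)) : Setoid (Tup V k) :=
  R^[Fintype.card V ^ k] γ

/-- A graph on `V` : a labelled partition of `V²` that is a rainbow. -/
def IsGraph (Γ : Setoid (Tup V 2)) : Prop :=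
  (∀ u x y : V, Γ.r ![u, u] ![x, y] → x = y) ∧
  (∀ u v u' v' : V, Γ.r ![u, v] ![u', v'] ↔ Γ.r ![v, u] ![v', u'])

/-- The atomic-type partition `α_{k,Γ}` of `V^k` determined by a graph `Γ`. -/
def atomicPart {k : ℕ} (Γ : Setoid (Tup V 2)) : Setoid (Tup V k) where
  r u v := ∀ i j : Fin k, i ≠ j → Γ.r ![u i, u j] ![v i, v j]
  iseqv := ⟨fun _ _ _ _ => Γ.iseqv.refl _, fun h i j hij => Γ.iseqv.symm (h i j hij),
    fun h h' i j hij => Γ.iseqv.trans (h i j hij) (h' i j hij)⟩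

/-- `WL̄_{k,r}(Γ)`. -/
def WLbarR [Nonempty V] [Fintype V] (k r : ℕ) (Γ : Setoid (Tup V 2)) : Setoid (Tup V 2) :=
  if k ≤ 1 then Γ else prPart 2 (stabilize (WLop (k := k) r) (atomicPart Γ))

/-- `C̄_{k,r}(Γ)`. -/
def CbarR [Nonempty V] [Fintype V] (k r : ℕ) (Γ : Setoid (Tup V 2)) : Setoid (Tup V 2) :=
  if k ≤ 1 then Γ else prPart 2 (stabilize (Cop (k := k) r) (atomicPart Γ))

/-- `WL̄_k(Γ) = WL̄_{k,1}(Γ)`. -/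
def WLbar [Nonempty V] [Fintype V] (k : ℕ) (Γ : Setoid (Tup V 2)) : Setoid (Tup V 2) :=
  WLbarR k 1 Γ

/-- `C̄_k(Γ) = C̄_{k,1}(Γ)`. -/
def Cbar [Nonempty V] [Fintype V] (k : ℕ) (Γ : Setoid (Tup V 2)) : Setoid (Tup V 2) :=
  CbarR k 1 Γ

/-- `IM̄_k^F(Γ)`. -/
def IMbar (F : Type) [Field F] [Nonempty V] [Fintype V] [DecidableEq V]
    (k : ℕ) (Γ : Setoid (Tup V 2)) : Setoid (Tup V 2) :=
  if k ≤ 1 then Γ else prPart 2 (stabilize (IMop (k := k) F) (atomicPart Γ))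

/-- `IMt̄_k^F(Γ)`. -/
def IMtbar (F : Type) [Field F] [Nonempty V] [Fintype V] [DecidableEq V]
    (k : ℕ) (Γ : Setoid (Tup V 2)) : Setoid (Tup V 2) :=
  if k ≤ 1 then Γ else prPart 2 (stabilize (IMtop (k := k) F) (atomicPart Γ))

/-- A nonempty finite set together with a graph on it. -/
structure FinGraph where
  V : Type
  [instFintype : Fintype V]
  [instDecEq : DecidableEq V]
  [instNonempty : Nonempty V]
  Γ : Setoid (Tup V 2)
  isGraph : IsGraph Γ

attribute [instance] FinGraph.instFintype FinGraph.instDecEq FinGraph.instNonempty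

/-!
Split the `m + n` substituted positions into a first block of `m` and a second block of `n`.
The number of `x ∈ V^(m+n)` with `γ(u⟨i,x⟩) = σ` is then the sum, over the first block
`x' ∈ V^m`, of a count that by `C_{k,n}`-stability depends only on the colour of `u⟨i',x'⟩`;
by `C_{k,m}`-stability these colours are distributed equally for `u` and for `v`. Hence
`C_{k,m}`- and `C_{k,n}`-stability give `C_{k,m+n}`-stability, and induction on `r` from the
trivial case `r = 0` does the rest.
-/

theorem Setoid.exists_equiv_rel_of_ncard_eq {α β : Type*} [Finite α] (s : Setoid β)
    {g g' : α → β} (h : ∀ b, {x | s.r (g x) b}.ncard = {x | s.r (g' x) b}.ncard) :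
    ∃ e : α ≃ α, ∀ x, s.r (g' (e x)) (g x) := by
  have fiber (c : Quotient s) :
      Nonempty ({x // Quotient.mk s (g x) = c} ≃ {x // Quotient.mk s (g' x) = c}) := by
    induction c using Quotient.inductionOn with
    | h b =>
      simp only [Quotient.eq]
      rw [← Finite.card_eq]
      have hb := h b
      rwa [← Nat.card_coe_set_eq, ← Nat.card_coe_set_eq] at hb
  refine ⟨Equiv.ofFiberEquiv fun c => (fiber c).some, fun x => Quotient.exact ?_⟩
  exact Equiv.ofFiberEquiv_map (fun c => (fiber c).some) x

section SubstTup

variable {k m n : ℕ}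

lemma substTup_apply_of_injective (u : Tup V k) {i : Fin m → Fin k}
    (hi : Function.Injective i) (x : Tup V m) (s : Fin m) :
    substTup u i x (i s) = x s := by
  have h : ∃ t, i t = i s := ⟨s, rfl⟩
  rw [substTup, dif_pos h, hi h.choose_spec]

lemma substTup_apply_of_notMem_range (u : Tup V k) (i : Fin m → Fin k) (x : Tup V m)
    {j : Fin k} (hj : j ∉ Set.range i) : substTup u i x j = u j :=
  dif_neg hj

lemma substTup_fin_zero (u : Tup V k) (i : Fin 0 → Fin k) (x : Tup V 0) :
    substTup u i x = u :=
  funext fun _ => substTup_apply_of_notMem_range u i x (by simp)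

lemma substTup_append (u : Tup V k) {i : Fin (m + n) → Fin k} (hi : Function.Injective i)
    (x : Tup V m) (y : Tup V n) :
    substTup u i (Fin.append x y)
      = substTup (substTup u (i ∘ Fin.castAdd n) x) (i ∘ Fin.natAdd m) y := by
  funext j
  by_cases hj : j ∈ Set.range i
  · obtain ⟨s, rfl⟩ := hj
    rw [substTup_apply_of_injective u hi]
    induction s using Fin.addCases with
    | left s =>
      have hs : i (Fin.castAdd n s) ∉ Set.range (i ∘ Fin.natAdd m) := by
        rintro ⟨t, ht⟩
        have := congrArg Fin.val (hi ht)
        simp only [Fin.val_natAdd, Fin.val_castAdd] at this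
        omega
      rw [substTup_apply_of_notMem_range _ _ _ hs, Fin.append_left]
      exact (substTup_apply_of_injective u (hi.comp (Fin.castAdd_injective m n)) x s).symm
    | right t =>
      rw [Fin.append_right]
      exact (substTup_apply_of_injective _ (hi.comp (Fin.natAdd_injective n m)) y t).symm
  · have hleft : j ∉ Set.range (i ∘ Fin.castAdd n) :=
      fun h => hj (Set.range_comp_subset_range _ _ h)
    have hright : j ∉ Set.range (i ∘ Fin.natAdd m) :=
      fun h => hj (Set.range_comp_subset_range _ _ h)
    rw [substTup_apply_of_notMem_range _ _ _ hj, substTup_apply_of_notMem_range _ _ _ hright,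
      substTup_apply_of_notMem_range _ _ _ hleft]

lemma ncard_setOf_eq_sum_ncard_append [Fintype V] (P : Tup V (m + n) → Prop) :
    {z | P z}.ncard = ∑ x : Tup V m, {y : Tup V n | P (Fin.append x y)}.ncard := by
  rw [← Nat.card_coe_set_eq]
  calc Nat.card {z // P z}
      = Nat.card {p : Tup V m × Tup V n // P (Fin.append p.1 p.2)} :=
        Nat.card_congr ((Fin.appendEquiv m n).subtypeEquiv fun _ => Iff.rfl).symm
    _ = Nat.card (Σ x : Tup V m, {y : Tup V n // P (Fin.append x y)}) :=
        Nat.card_congr (Equiv.subtypeProdEquivSigmaSubtype fun x y => P (Fin.append x y))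
    _ = _ := by
        rw [Nat.card_sigma]
        exact Finset.sum_congr rfl fun x _ => Nat.card_coe_set_eq _

end SubstTup

section CStable

variable {k m n : ℕ} {γ : Setoid (Tup V k)}

lemma ncard_cSet_append [Fintype V] (u : Tup V k) {i : Fin (m + n) → Fin k}
    (hi : Function.Injective i) (w : Tup V k) :
    (CSet γ u i w).ncard
      = ∑ x : Tup V m, (CSet γ (substTup u (i ∘ Fin.castAdd n) x) (i ∘ Fin.natAdd m) w).ncard := by
  simp only [CSet, ← substTup_append u hi]
  exact ncard_setOf_eq_sum_ncard_append _

lemma cStable_zero : CStable 0 γ := by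
  intro _ u v huv i _ w
  congr 1
  ext x
  simp only [CSet, Set.mem_ofPred_eq, substTup_fin_zero]
  exact ⟨γ.iseqv.trans (γ.iseqv.symm huv), γ.iseqv.trans huv⟩

theorem CStable.add [Fintype V] (hm : CStable m γ) (hn : CStable n γ) : CStable (m + n) γ := by
  intro hk u v huv i hi w
  obtain ⟨e, he⟩ := Setoid.exists_equiv_rel_of_ncard_eq γ
    (hm (by omega) u v huv (i ∘ Fin.castAdd n) (hi.comp (Fin.castAdd_injective m n)))
  rw [ncard_cSet_append u hi, ncard_cSet_append v hi]
  exact Fintype.sum_equiv e _ _ fun x =>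
    hn (by omega) _ _ (γ.iseqv.symm (he x)) _ (hi.comp (Fin.natAdd_injective n m)) w

end CStable

theorem c1_stable_cr_stable_general (V : Type) [Fintype V] (k r : ℕ)
    (γ : Setoid (Tup V k)) (h : CStable 1 γ) : CStable r γ := by
  induction r with
  | zero => exact cStable_zero
  | succ r ih => exact ih.add h

/-- Every `C_k`-stable partition is `C_{k,r}`-stable. -/
theorem c1_stable_cr_stable (V : Type) [Fintype V] [Nonempty V] (k r : ℕ)
    (γ : Setoid (Tup V k)) (h : CStable 1 γ) : CStable r γ :=
  c1_stable_cr_stable_general V k r γ h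

end
end

section
/- For all k, r ∈ ℕ and every nonempty finite set V, if γ ∈ P(V^{k+r}) is graph-like and C_{k+r,r}-stable, then its k-projection pr_k γ is WL_{k,r}-stable. -/
open Classical Matrix

noncomputable section

variable {V : Type}

/-!
Write `(u, x) ∈ V^(k+r)` for the concatenation of `u ∈ V^k` and `x ∈ V^r`. Every tuple
`u⟨i,x⟩`, padded to length `k + r`, is a coordinate projection of `(u, x)`, so by consistency
whether `x` lies in the `WL_{k,r}` set of `u` depends only on the `γ`-colour of `(u, x)`.
`C_{k+r,r}`-stability at the last `r` positions says that `u` and `v` have equally many `x`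
in each colour class of `(u, x)`, hence equally many in any union of colour classes.
-/

theorem Setoid.ncard_preimage_eq_of_forall_ncard_rel_eq {α β : Type*} [Finite α] (s : Setoid β)
    {S : Set β} (hS : ∀ a b, s.r a b → a ∈ S → b ∈ S) {f g : α → β}
    (hfg : ∀ w, {x | s.r (f x) w}.ncard = {x | s.r (g x) w}.ncard) :
    (f ⁻¹' S).ncard = (g ⁻¹' S).ncard := by
  classical
  cases nonempty_fintype α
  have ncard_eq (p : α → Prop) : {x | p x}.ncard = Multiset.card (Finset.univ.val.filter p) := by
    rw [Set.ncard_eq_toFinset_card', Set.toFinset_ofPred]; rfl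
  let classes (h : α → β) : Multiset (Quotient s) := Finset.univ.val.map fun x => ⟦h x⟧
  have hclasses : classes f = classes g :=
    Multiset.ext.2 fun c => Quotient.inductionOn c fun w => by
      simpa [classes, Multiset.count_map, ncard_eq, Quotient.eq, s.comm] using hfg w
  have ncard_eq_classes (h : α → β) :
      (h ⁻¹' S).ncard = Multiset.card ((classes h).filter (·.out ∈ S)) := by
    rw [Multiset.filter_map, Multiset.card_map, ← ncard_eq]
    congr 1
    ext x
    exact ⟨hS _ _ (s.symm (Quotient.mk_out _)), hS _ _ (Quotient.mk_out _)⟩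
  rw [ncard_eq_classes, ncard_eq_classes, hclasses]

def substIndex {k r : ℕ} (i : Fin r → Fin k) (j : Fin k) : Fin (k + r) :=
  if h : ∃ s, i s = j then Fin.natAdd k h.choose else Fin.castAdd r j

def clampIndex {k : ℕ} (hk : 0 < k) (n : ℕ) (m : Fin n) : Fin k :=
  ⟨min m (k - 1), by omega⟩

theorem substTup_eq_prTup_append {k r : ℕ} (u : Tup V k) (i : Fin r → Fin k) (x : Tup V r) :
    substTup u i x = prTup (substIndex i) (Fin.append u x) := by
  funext j
  by_cases h : ∃ s, i s = j <;> simp [substTup, prTup, substIndex, h]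

theorem extendTup_eq_prTup [Nonempty V] {k : ℕ} (hk : 0 < k) (n : ℕ) (w : Tup V k) :
    extendTup n w = prTup (clampIndex hk n) w := by
  funext m
  by_cases hm : (m : ℕ) < k
  · simp [extendTup, prTup, clampIndex, hm, show (m : ℕ) ≤ k - 1 by omega]
  · simp [extendTup, prTup, clampIndex, hm, hk, show k - 1 ≤ (m : ℕ) by omega]

theorem extendTup_self [Nonempty V] {n : ℕ} (w : Tup V n) : extendTup n w = w := by
  funext m
  simp [extendTup]

theorem substTup_extendTup_natAdd [Nonempty V] {k r : ℕ} (u : Tup V k) (x : Tup V r) :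
    substTup (extendTup (k + r) u) (Fin.natAdd k) x = Fin.append u x := by
  funext m
  refine Fin.addCases (fun j => ?_) (fun s => ?_) m
  · have hj : ¬∃ s : Fin r, Fin.natAdd k s = Fin.castAdd r j := by
      rintro ⟨s, hs⟩
      have := congrArg Fin.val hs
      simp only [Fin.val_natAdd, Fin.val_castAdd] at this
      omega
    simp [substTup, extendTup, hj]
  · simp [substTup]

theorem Consistent.rel_prTup [Nonempty V] {n : ℕ} {γ : Setoid (Tup V n)} (hγ : Consistent n γ)
    {u v : Tup V n} (huv : γ.r u v) (j : Fin n → Fin n) : γ.r (prTup j u) (prTup j v) := by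
  rw [← extendTup_self (prTup j u), ← extendTup_self (prTup j v)]
  exact hγ u v huv j

theorem WLSet_prPart_eq_preimage_append [Nonempty V] {n k r : ℕ} (hk : 0 < k)
    (γ : Setoid (Tup V n)) (u : Tup V k) (φ : (Fin r → Fin k) → Tup V k) :
    WLSet (prPart k γ) u φ =
      Fin.append u ⁻¹' {t | ∀ i : Fin r → Fin k, Function.Injective i →
        γ.r (prTup (substIndex i ∘ clampIndex hk n) t) (extendTup n (φ i))} := by
  ext x
  refine forall₂_congr fun i _ => ?_
  change γ.r (extendTup n (substTup u i x)) _ ↔ _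
  rw [extendTup_eq_prTup hk n (substTup u i x), substTup_eq_prTup_append]
  rfl

/-- The `k`-projection of a `C_{k+r,r}`-stable graph-like partition is `WL_{k,r}`-stable. -/
theorem c_stable_proj_wl_stable (V : Type) [Fintype V] [Nonempty V] (k r : ℕ)
    (γ : Setoid (Tup V (k + r))) (hγ : GraphLike γ) (h : CStable r γ) :
    WLStable r (prPart k γ) := by
  intro hr u v huv φ
  have hk : 0 < k := by omega
  rw [WLSet_prPart_eq_preimage_append hk, WLSet_prPart_eq_preimage_append hk]
  apply Setoid.ncard_preimage_eq_of_forall_ncard_rel_eq γ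
  · intro a b hab ha i hi
    exact γ.trans (γ.symm ((hγ.2.1 _ le_rfl).rel_prTup hab _)) (ha i hi)
  · intro w
    simpa only [CSet, substTup_extendTup_natAdd] using
      h (by omega) _ _ huv (Fin.natAdd k) (Fin.natAdd_injective r k) w

end
end
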